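/- arXiv:2603.29827 — 2 statements merged into one kernel-verified Lean document; each statement's English description precedes it below -/
import Mathlib

section
/- Let G ⊂ PGL₄(ℂ) be the group generated by the involution [x₀:x₁:x₂:x₃] ↦ [x₃:x₂:x₁:x₀] and the one-parameter family [x₀:x₁:x₂:x₃] ↦ [λx₀ : λ⁵x₁ : x₂ : λ⁴x₃] for λ ∈ ℂ*. Then P³ contains no G-fixed point, and the only G-invariant lines in P³ are ℓ₁ = V(x₀, x₃) and ℓ₂ = V(x₁, x₂). Moreover, for the quadric Q = V(x₀x₃ - x₁x₂) and the curve C₀ parametrized by [y₀:y₁] ↦ [y₀y₁⁴ : y₀⁵ : y₁⁵ : y₀⁴y₁], one has ℓ₁ ∩ Q = ℓ₁ ∩ C₀ = {[0:1:0:0], [0:0:1:0]}, ℓ₂ ∩ Q = {[1:0:0:0], [0:0:0:1]}, and ℓ₂ ∩ C₀ = ∅. -/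
/-- Equivariant geometry of the group `G ⊂ PGL₄(ℂ)` generated by the
involution `σ : [x₀:x₁:x₂:x₃] ↦ [x₃:x₂:x₁:x₀]` and the torus
`τ_λ : [x₀:x₁:x₂:x₃] ↦ [λx₀:λ⁵x₁:x₂:λ⁴x₃]`, acting on `ℙ³` (points of `ℙ³`
are encoded as nonzero vectors of `ℂ⁴` up to scaling, and lines as
`2`-dimensional linear subspaces of `ℂ⁴`):
(1) `ℙ³` has no `G`-fixed point;
(2) the only `G`-invariant lines are `ℓ₁ = V(x₀,x₃)` and `ℓ₂ = V(x₁,x₂)`;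
(3) `ℓ₁ ∩ Q = ℓ₁ ∩ C₀ = {[0:1:0:0],[0:0:1:0]}`,
    `ℓ₂ ∩ Q = {[1:0:0:0],[0:0:0:1]}`, and `ℓ₂ ∩ C₀ = ∅`,
where `Q = V(x₀x₃ - x₁x₂)` and `C₀` is the quintic rational curve
`[y₀:y₁] ↦ [y₀y₁⁴ : y₀⁵ : y₁⁵ : y₀⁴y₁]`. -/
theorem stmt_12
    (σ : (Fin 4 → ℂ) →ₗ[ℂ] (Fin 4 → ℂ))
    (hσ : ∀ v : Fin 4 → ℂ, σ v = ![v 3, v 2, v 1, v 0])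
    (τ : ℂ → ((Fin 4 → ℂ) →ₗ[ℂ] (Fin 4 → ℂ)))
    (hτ : ∀ (lam : ℂ) (v : Fin 4 → ℂ),
      τ lam v = ![lam * v 0, lam^5 * v 1, v 2, lam^4 * v 3])
    (ℓ₁ ℓ₂ : Submodule ℂ (Fin 4 → ℂ))
    (hℓ₁ : ∀ v : Fin 4 → ℂ, v ∈ ℓ₁ ↔ (v 0 = 0 ∧ v 3 = 0))
    (hℓ₂ : ∀ v : Fin 4 → ℂ, v ∈ ℓ₂ ↔ (v 1 = 0 ∧ v 2 = 0))
    (Q : Set (Fin 4 → ℂ)) (hQ : ∀ v, v ∈ Q ↔ v 0 * v 3 = v 1 * v 2)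
    (C₀ : Set (Fin 4 → ℂ))
    (hC₀ : ∀ v, v ∈ C₀ ↔ ∃ y₀ y₁ : ℂ, ¬(y₀ = 0 ∧ y₁ = 0) ∧
      v = ![y₀ * y₁^4, y₀^5, y₁^5, y₀^4 * y₁]) :
    -- (1) no G-fixed point in ℙ³
    (¬ ∃ v : Fin 4 → ℂ, v ≠ 0 ∧ (∃ c : ℂ, σ v = c • v) ∧
        (∀ lam : ℂ, lam ≠ 0 → ∃ c : ℂ, τ lam v = c • v)) ∧
    -- (2) the only G-invariant lines are ℓ₁ and ℓ₂
    (∀ W : Submodule ℂ (Fin 4 → ℂ), Module.finrank ℂ W = 2 →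
        Submodule.map σ W = W →
        (∀ lam : ℂ, lam ≠ 0 → Submodule.map (τ lam) W = W) →
        W = ℓ₁ ∨ W = ℓ₂) ∧
    -- (3) the intersections
    (∀ v : Fin 4 → ℂ, v ≠ 0 →
        ((v ∈ ℓ₁ ∧ v ∈ Q) ↔
          ∃ c : ℂ, c ≠ 0 ∧ (v = c • ![0,1,0,0] ∨ v = c • ![0,0,1,0]))) ∧
    (∀ v : Fin 4 → ℂ, v ≠ 0 →
        ((v ∈ ℓ₁ ∧ v ∈ C₀) ↔
          ∃ c : ℂ, c ≠ 0 ∧ (v = c • ![0,1,0,0] ∨ v = c • ![0,0,1,0]))) ∧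
    (∀ v : Fin 4 → ℂ, v ≠ 0 →
        ((v ∈ ℓ₂ ∧ v ∈ Q) ↔
          ∃ c : ℂ, c ≠ 0 ∧ (v = c • ![1,0,0,0] ∨ v = c • ![0,0,0,1]))) ∧
    (¬ ∃ v : Fin 4 → ℂ, v ≠ 0 ∧ v ∈ ℓ₂ ∧ v ∈ C₀) := by
  refine ⟨?_, ?_, ?_, ?_, ?_, ?_⟩
  · rintro ⟨v, hv, ⟨c', hc'⟩, hτall⟩
    obtain ⟨c, hc⟩ := hτall 2 two_ne_zero
    rw [hτ] at hc
    rw [hσ] at hc'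
    have h0 := congrFun hc 0
    have h1 := congrFun hc 1
    have h2 := congrFun hc 2
    have h3 := congrFun hc 3
    have g0 := congrFun hc' 0
    have g1 := congrFun hc' 1
    have g2 := congrFun hc' 2
    have g3 := congrFun hc' 3
    simp only [Matrix.cons_val_zero, Matrix.cons_val_one, Matrix.head_cons,
      Matrix.cons_val_two, Matrix.tail_cons, Matrix.cons_val_three, Pi.smul_apply,
      smul_eq_mul] at h0 h1 h2 h3 g0 g1 g2 g3
    apply hv
    funext i
    fin_cases i <;> simp only [Pi.zero_apply]
    · show v 0 = 0
      by_contra h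
      have hc2 : c = 2 := mul_right_cancel₀ h h0.symm
      rw [hc2] at h3
      have hv3 : v 3 = 0 := by linear_combination h3 / 14
      exact h (by rw [g3, hv3, mul_zero])
    · show v 1 = 0
      by_contra h
      have hc2 : c = 2^5 := mul_right_cancel₀ h h1.symm
      rw [hc2] at h2
      have hv2 : v 2 = 0 := by linear_combination -h2 / 31
      exact h (by rw [g2, hv2, mul_zero])
    · show v 2 = 0
      by_contra h
      have hc2 : c = 1 := mul_right_cancel₀ h ((one_mul (v 2)).trans h2).symm
      rw [hc2] at h1
      have hv1 : v 1 = 0 := by linear_combination h1 / 31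
      exact h (by rw [g1, hv1, mul_zero])
    · show v 3 = 0
      by_contra h
      have hc2 : c = 2^4 := mul_right_cancel₀ h h3.symm
      rw [hc2] at h0
      have hv0 : v 0 = 0 := by linear_combination -h0 / 14
      exact h (by rw [g0, hv0, mul_zero])
  · intro W hrank hσW hτW
    have hτ2 : ∀ v ∈ W, τ 2 v ∈ W := fun v hv => by
      rw [← hτW 2 two_ne_zero]; exact Submodule.mem_map_of_mem hv
    have hσm : ∀ v ∈ W, σ v ∈ W := fun v hv => by
      rw [← hσW]; exact Submodule.mem_map_of_mem hv
    -- component extraction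
    have c0 : ∀ v ∈ W, (![v 0, 0, 0, 0] : Fin 4 → ℂ) ∈ W := by
      intro v hv
      have h1 := hτ2 v hv
      have h2 := hτ2 _ h1
      have h3 := hτ2 _ h2
      have he : (![v 0, 0, 0, 0] : Fin 4 → ℂ) =
          (-128/105 : ℂ) • v + (4/3 : ℂ) • τ 2 v + (-7/60 : ℂ) • τ 2 (τ 2 v)
            + (1/420 : ℂ) • τ 2 (τ 2 (τ 2 v)) := by
        funext i
        simp only [hτ, Matrix.cons_val_zero, Matrix.cons_val_one, Matrix.head_cons,
          Matrix.cons_val_two, Matrix.tail_cons, Matrix.cons_val_three,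
          Pi.add_apply, Pi.smul_apply, smul_eq_mul]
        fin_cases i <;> simp <;> ring
      rw [he]
      exact W.add_mem (W.add_mem (W.add_mem (W.smul_mem _ hv) (W.smul_mem _ h1))
        (W.smul_mem _ h2)) (W.smul_mem _ h3)
    have c1 : ∀ v ∈ W, (![0, v 1, 0, 0] : Fin 4 → ℂ) ∈ W := by
      intro v hv
      have h1 := hτ2 v hv
      have h2 := hτ2 _ h1
      have h3 := hτ2 _ h2
      have he : (![0, v 1, 0, 0] : Fin 4 → ℂ) =
          (-1/465 : ℂ) • v + (5/1488 : ℂ) • τ 2 v + (-19/14880 : ℂ) • τ 2 (τ 2 v)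
            + (1/14880 : ℂ) • τ 2 (τ 2 (τ 2 v)) := by
        funext i
        simp only [hτ, Matrix.cons_val_zero, Matrix.cons_val_one, Matrix.head_cons,
          Matrix.cons_val_two, Matrix.tail_cons, Matrix.cons_val_three,
          Pi.add_apply, Pi.smul_apply, smul_eq_mul]
        fin_cases i <;> simp <;> ring
      rw [he]
      exact W.add_mem (W.add_mem (W.add_mem (W.smul_mem _ hv) (W.smul_mem _ h1))
        (W.smul_mem _ h2)) (W.smul_mem _ h3)
    have c2 : ∀ v ∈ W, (![0, 0, v 2, 0] : Fin 4 → ℂ) ∈ W := by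
      intro v hv
      have h1 := hτ2 v hv
      have h2 := hτ2 _ h1
      have h3 := hτ2 _ h2
      have he : (![0, 0, v 2, 0] : Fin 4 → ℂ) =
          (1024/465 : ℂ) • v + (-608/465 : ℂ) • τ 2 v + (10/93 : ℂ) • τ 2 (τ 2 v)
            + (-1/465 : ℂ) • τ 2 (τ 2 (τ 2 v)) := by
        funext i
        simp only [hτ, Matrix.cons_val_zero, Matrix.cons_val_one, Matrix.head_cons,
          Matrix.cons_val_two, Matrix.tail_cons, Matrix.cons_val_three,
          Pi.add_apply, Pi.smul_apply, smul_eq_mul]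
        fin_cases i <;> simp <;> ring
      rw [he]
      exact W.add_mem (W.add_mem (W.add_mem (W.smul_mem _ hv) (W.smul_mem _ h1))
        (W.smul_mem _ h2)) (W.smul_mem _ h3)
    have c3 : ∀ v ∈ W, (![0, 0, 0, v 3] : Fin 4 → ℂ) ∈ W := by
      intro v hv
      have h1 := hτ2 v hv
      have h2 := hτ2 _ h1
      have h3 := hτ2 _ h2
      have he : (![0, 0, 0, v 3] : Fin 4 → ℂ) =
          (2/105 : ℂ) • v + (-7/240 : ℂ) • τ 2 v + (1/96 : ℂ) • τ 2 (τ 2 v)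
            + (-1/3360 : ℂ) • τ 2 (τ 2 (τ 2 v)) := by
        funext i
        simp only [hτ, Matrix.cons_val_zero, Matrix.cons_val_one, Matrix.head_cons,
          Matrix.cons_val_two, Matrix.tail_cons, Matrix.cons_val_three,
          Pi.add_apply, Pi.smul_apply, smul_eq_mul]
        fin_cases i <;> simp <;> ring
      rw [he]
      exact W.add_mem (W.add_mem (W.add_mem (W.smul_mem _ hv) (W.smul_mem _ h1))
        (W.smul_mem _ h2)) (W.smul_mem _ h3)
    -- basis vector memberships
    have E0 : ∀ v ∈ W, v 0 ≠ 0 → (![1,0,0,0] : Fin 4 → ℂ) ∈ W := by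
      intro v hv h
      have := W.smul_mem (v 0)⁻¹ (c0 v hv)
      convert this using 1
      funext i; fin_cases i <;> simp [inv_mul_cancel₀ h]
    have E1 : ∀ v ∈ W, v 1 ≠ 0 → (![0,1,0,0] : Fin 4 → ℂ) ∈ W := by
      intro v hv h
      have := W.smul_mem (v 1)⁻¹ (c1 v hv)
      convert this using 1
      funext i; fin_cases i <;> simp [inv_mul_cancel₀ h]
    have E2 : ∀ v ∈ W, v 2 ≠ 0 → (![0,0,1,0] : Fin 4 → ℂ) ∈ W := by
      intro v hv h
      have := W.smul_mem (v 2)⁻¹ (c2 v hv)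
      convert this using 1
      funext i; fin_cases i <;> simp [inv_mul_cancel₀ h]
    have E3 : ∀ v ∈ W, v 3 ≠ 0 → (![0,0,0,1] : Fin 4 → ℂ) ∈ W := by
      intro v hv h
      have := W.smul_mem (v 3)⁻¹ (c3 v hv)
      convert this using 1
      funext i; fin_cases i <;> simp [inv_mul_cancel₀ h]
    -- sigma images of basis vectors
    have s0 : σ (![1,0,0,0] : Fin 4 → ℂ) = ![0,0,0,1] := by
      rw [hσ]; funext i; fin_cases i <;> simp
    have s3 : σ (![0,0,0,1] : Fin 4 → ℂ) = ![1,0,0,0] := by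
      rw [hσ]; funext i; fin_cases i <;> simp
    have s1 : σ (![0,1,0,0] : Fin 4 → ℂ) = ![0,0,1,0] := by
      rw [hσ]; funext i; fin_cases i <;> simp
    have s2 : σ (![0,0,1,0] : Fin 4 → ℂ) = ![0,1,0,0] := by
      rw [hσ]; funext i; fin_cases i <;> simp
    -- dichotomy
    by_cases hA : ∀ v ∈ W, v 0 = 0 ∧ v 3 = 0
    · -- W = ℓ₁
      left
      have hWne : W ≠ ⊥ := by
        intro h; rw [h] at hrank; simp at hrank
      obtain ⟨v, hvW, hvne⟩ := Submodule.exists_mem_ne_zero_of_ne_bot hWne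
      have hv03 := hA v hvW
      have h12 : v 1 ≠ 0 ∨ v 2 ≠ 0 := by
        by_contra h
        push_neg at h
        exact hvne (by funext i; fin_cases i <;>
          simp [hv03.1, hv03.2, h.1, h.2])
      have hE12 : (![0,1,0,0] : Fin 4 → ℂ) ∈ W ∧ (![0,0,1,0] : Fin 4 → ℂ) ∈ W := by
        rcases h12 with h | h
        · have e1 := E1 v hvW h
          exact ⟨e1, by rw [← s1]; exact hσm _ e1⟩
        · have e2 := E2 v hvW h
          exact ⟨by rw [← s2]; exact hσm _ e2, e2⟩
      apply le_antisymm
      · intro v hv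
        rw [hℓ₁]
        exact hA v hv
      · intro u hu
        rw [hℓ₁] at hu
        have : u = u 1 • ![0,1,0,0] + u 2 • ![0,0,1,0] := by
          funext i; fin_cases i <;> simp [hu.1, hu.2]
        rw [this]
        exact W.add_mem (W.smul_mem _ hE12.1) (W.smul_mem _ hE12.2)
    · -- there is v ∈ W with v 0 ≠ 0 or v 3 ≠ 0, so E0, E3 ∈ W
      push_neg at hA
      obtain ⟨u, huW, hu03⟩ := hA
      have hE03 : (![1,0,0,0] : Fin 4 → ℂ) ∈ W ∧ (![0,0,0,1] : Fin 4 → ℂ) ∈ W := by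
        have hca : u 0 ≠ 0 ∨ u 3 ≠ 0 := by tauto
        rcases hca with h | h3
        · have e0 := E0 u huW h
          exact ⟨e0, by rw [← s0]; exact hσm _ e0⟩
        · have e3 := E3 u huW h3
          exact ⟨by rw [← s3]; exact hσm _ e3, e3⟩
      by_cases hB : ∀ v ∈ W, v 1 = 0 ∧ v 2 = 0
      · right
        apply le_antisymm
        · intro v hv
          rw [hℓ₂]
          exact hB v hv
        · intro u hu
          rw [hℓ₂] at hu
          have : u = u 0 • ![1,0,0,0] + u 3 • ![0,0,0,1] := by
            funext i; fin_cases i <;> simp [hu.1, hu.2]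
          rw [this]
          exact W.add_mem (W.smul_mem _ hE03.1) (W.smul_mem _ hE03.2)
      · exfalso
        push_neg at hB
        obtain ⟨w, hwW, hw12⟩ := hB
        have hE12 : (![0,1,0,0] : Fin 4 → ℂ) ∈ W ∧ (![0,0,1,0] : Fin 4 → ℂ) ∈ W := by
          have hca : w 1 ≠ 0 ∨ w 2 ≠ 0 := by tauto
          rcases hca with h | h
          · have e1 := E1 w hwW h
            exact ⟨e1, by rw [← s1]; exact hσm _ e1⟩
          · have e2 := E2 w hwW h
            exact ⟨by rw [← s2]; exact hσm _ e2, e2⟩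
        have hWtop : W = ⊤ := by
          rw [eq_top_iff]
          intro v _
          have : v = v 0 • ![1,0,0,0] + v 1 • ![0,1,0,0] + v 2 • ![0,0,1,0]
              + v 3 • ![0,0,0,1] := by
            funext i; fin_cases i <;> simp
          rw [this]
          exact W.add_mem (W.add_mem (W.add_mem (W.smul_mem _ hE03.1)
            (W.smul_mem _ hE12.1)) (W.smul_mem _ hE12.2)) (W.smul_mem _ hE03.2)
        rw [hWtop] at hrank
        rw [finrank_top] at hrank
        simp [Module.finrank_fin_fun] at hrank
  · -- ℓ₁ ∩ Q
    intro v hv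
    constructor
    · rintro ⟨hl, hq⟩
      rw [hℓ₁] at hl
      rw [hQ] at hq
      rw [hl.1, hl.2, zero_mul] at hq
      rcases mul_eq_zero.mp hq.symm with h1 | h2
      · have h2 : v 2 ≠ 0 := by
          intro h2
          exact hv (by funext i; fin_cases i <;>
            simp [hl.1, hl.2, h1, h2])
        exact ⟨v 2, h2, Or.inr (by funext i; fin_cases i <;>
          simp [hl.1, hl.2, h1])⟩
      · have h1 : v 1 ≠ 0 := by
          intro h1
          exact hv (by funext i; fin_cases i <;>
            simp [hl.1, hl.2, h1, h2])
        exact ⟨v 1, h1, Or.inl (by funext i; fin_cases i <;>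
          simp [hl.1, hl.2, h2])⟩
    · rintro ⟨c, hc, h | h⟩ <;> subst h <;>
        constructor <;> simp [hℓ₁, hQ]
  · -- ℓ₁ ∩ C₀
    intro v hv
    constructor
    · rintro ⟨hl, hc⟩
      rw [hℓ₁] at hl
      rw [hC₀] at hc
      obtain ⟨y₀, y₁, hy, hveq⟩ := hc
      have h0 : y₀ * y₁^4 = 0 := by
        have := hl.1
        rw [hveq] at this
        simpa using this
      rcases mul_eq_zero.mp h0 with h | h
      · have hy1 : y₁ ≠ 0 := fun h1 => hy ⟨h, h1⟩
        refine ⟨y₁^5, pow_ne_zero _ hy1, Or.inr ?_⟩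
        rw [hveq]
        funext i; fin_cases i <;> simp [h]
      · have h : y₁ = 0 := by
          have := pow_eq_zero_iff (n := 4) (by norm_num) |>.mp h
          exact this
        have hy0 : y₀ ≠ 0 := fun h0' => hy ⟨h0', h⟩
        refine ⟨y₀^5, pow_ne_zero _ hy0, Or.inl ?_⟩
        rw [hveq]
        funext i; fin_cases i <;> simp [h]
    · rintro ⟨c, hc, h | h⟩ <;> subst h
      · refine ⟨by simp [hℓ₁], ?_⟩
        rw [hC₀]
        obtain ⟨y, hy⟩ := IsAlgClosed.exists_pow_nat_eq (k := ℂ) c (n := 5) (by norm_num)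
        have hyne : y ≠ 0 := by
          intro h; rw [h] at hy; simp at hy; exact hc hy.symm
        refine ⟨y, 0, fun h => hyne h.1, ?_⟩
        funext i; fin_cases i <;> simp [hy]
      · refine ⟨by simp [hℓ₁], ?_⟩
        rw [hC₀]
        obtain ⟨y, hy⟩ := IsAlgClosed.exists_pow_nat_eq (k := ℂ) c (n := 5) (by norm_num)
        have hyne : y ≠ 0 := by
          intro h; rw [h] at hy; simp at hy; exact hc hy.symm
        refine ⟨0, y, fun h => hyne h.2, ?_⟩
        funext i; fin_cases i <;> simp [hy]
  · -- ℓ₂ ∩ Q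
    intro v hv
    constructor
    · rintro ⟨hl, hq⟩
      rw [hℓ₂] at hl
      rw [hQ] at hq
      rw [hl.1, hl.2, zero_mul] at hq
      rcases mul_eq_zero.mp hq with h0 | h3
      · have h3 : v 3 ≠ 0 := by
          intro h3
          exact hv (by funext i; fin_cases i <;>
            simp [hl.1, hl.2, h0, h3])
        exact ⟨v 3, h3, Or.inr (by funext i; fin_cases i <;>
          simp [hl.1, hl.2, h0])⟩
      · have h0 : v 0 ≠ 0 := by
          intro h0
          exact hv (by funext i; fin_cases i <;>
            simp [hl.1, hl.2, h0, h3])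
        exact ⟨v 0, h0, Or.inl (by funext i; fin_cases i <;>
          simp [hl.1, hl.2, h3])⟩
    · rintro ⟨c, hc, h | h⟩ <;> subst h <;>
        constructor <;> simp [hℓ₂, hQ]
  · -- ℓ₂ ∩ C₀ = ∅
    rintro ⟨v, hv, hl, hc⟩
    rw [hℓ₂] at hl
    rw [hC₀] at hc
    obtain ⟨y₀, y₁, hy, hveq⟩ := hc
    apply hy
    constructor
    · have := hl.1
      rw [hveq] at this
      simp at this
      exact pow_eq_zero_iff (n := 5) (by norm_num) |>.mp (by simpa using this)
    · have := hl.2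
      rw [hveq] at this
      simp at this
      exact pow_eq_zero_iff (n := 5) (by norm_num) |>.mp (by simpa using this)
end

section
/- Let R be a ring, A an R-algebra, and I ⊆ A an ideal such that A, A/I, and I^k/I^{k+1} are flat over R for all k ≥ 1. Then A/I^k is flat over R for all k ≥ 1. Moreover, if (R, 𝔪) is local, then for every k ≥ 1 the natural map I^k/𝔪I^k → A/𝔪A is injective, and consequently (I·(A/𝔪A))^k = image of I^k in A/𝔪A, i.e. the formation of the powers of I commutes with reduction modulo 𝔪. -/
/-!
Flatness of `A/I^k` follows by induction from the extensions
`0 → I^k/I^{k+1} → A/I^{k+1} → A/I^k → 0`, since flat modules are closed under extensions.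
Over a local ring, flatness of `A/I^k` makes `Tor₁(R/𝔪, A/I^k)` vanish, so
`I^k/𝔪I^k → A/𝔪A` is injective, which is the inclusion `I^k ∩ 𝔪A ⊆ 𝔪I^k`.
-/

open TensorProduct LinearMap

namespace Module.Flat

variable {R M N P : Type*} [CommRing R] [AddCommGroup M] [AddCommGroup N] [AddCommGroup P]
  [Module R M] [Module R N] [Module R P]

/-- Four lemma for the multiplication maps `J ⊗ - → -`: the top row `0 → J ⊗ N → J ⊗ M → J ⊗ P`
stays exact because `Tor₁(J, P) = 0`. -/
theorem of_shortExact [Flat R N] [Flat R P] {f : N →ₗ[R] M} {g : M →ₗ[R] P}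
    (hf : Function.Injective f) (hfg : Function.Exact f g) (hg : Function.Surjective g) :
    Flat R M := by
  rw [iff_lift_lsmul_comp_subtype_injective]
  intro J hJ
  refine injective_of_surjective_of_injective_of_injective (0 : Unit →ₗ[R] J ⊗[R] N)
    (f.lTensor J) (g.lTensor J) (0 : Unit →ₗ[R] N) f g 0
    (lift ((lsmul R N).comp J.subtype)) (lift ((lsmul R M).comp J.subtype))
    (lift ((lsmul R P).comp J.subtype))
    (by simp) (by ext; simp) (by ext; simp) ?_ (_root_.lTensor_exact J hfg hg) ?_
    (fun _ => ⟨(), rfl⟩) (iff_lift_lsmul_comp_subtype_injective.mp ‹_› hJ)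
    (iff_lift_lsmul_comp_subtype_injective.mp ‹_› hJ)
  · simpa using lTensor_injective_of_exact_of_flat g hg f hf hfg J
  · simpa using hf

theorem quotient_of_le {p q : Submodule R M} (hqp : q ≤ p)
    [Flat R (p ⧸ q.comap p.subtype)] [Flat R (M ⧸ p)] : Flat R (M ⧸ q) := by
  let f := Submodule.mapQ (q.comap p.subtype) q p.subtype le_rfl
  have hf : Function.Injective f := by
    rw [← ker_eq_bot, Submodule.ker_mapQ]
    simp
  have hfg : Function.Exact f (Submodule.factor hqp) := by
    rw [exact_iff, Submodule.ker_mapQ, Submodule.range_mapQ]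
    simp
  exact of_shortExact hf hfg (Submodule.factor_surjective hqp)

end Module.Flat

namespace Submodule

variable {R M : Type*} [CommRing R] [AddCommGroup M] [Module R M]

theorem inf_smul_top_le_smul_of_flat_quotient (N : Submodule R M)
    [Module.Flat R (M ⧸ N)] (J : Ideal R) : N ⊓ J • ⊤ ≤ J • N := by
  let φ := mapQ (J • ⊤ : Submodule R N) (J • ⊤ : Submodule R M) N.subtype
    (by rw [← map_le_iff_le_comap, map_smul'']; exact smul_mono_right _ le_top)
  have hφ : φ = (quotTensorEquivQuotSMul M J).toLinearMap ∘ₗ N.subtype.lTensor (R ⧸ J) ∘ₗ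
      (quotTensorEquivQuotSMul N J).symm.toLinearMap := by
    ext x
    simp [φ, quotTensorEquivQuotSMul_symm_mk]
  have hφinj : Function.Injective φ := by
    rw [hφ]
    simpa using lTensor_injective_of_exact_of_flat N.mkQ N.mkQ_surjective N.subtype
      N.injective_subtype (exact_subtype_mkQ N) (R ⧸ J)
  rintro x ⟨hxN, hxJ⟩
  have hx : (⟨x, hxN⟩ : N) ∈ (J • ⊤ : Submodule R N) := by
    rw [← Quotient.mk_eq_zero, ← map_eq_zero_iff φ hφinj]
    simpa [φ] using hxJ
  simpa only [map_smul'', map_subtype_top, subtype_apply] using mem_map_of_mem (f := N.subtype) hx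

end Submodule

theorem stmt_15_general (R A : Type*) [CommRing R] [CommRing A] [Algebra R A]
    (I : Ideal A)
    (hAI : Module.Flat R (A ⧸ (I.restrictScalars R)))
    (hgr : ∀ k : ℕ, 1 ≤ k → Module.Flat R
      (((I ^ k).restrictScalars R) ⧸
        (Submodule.comap ((I ^ k).restrictScalars R).subtype
          ((I ^ (k+1)).restrictScalars R)))) :
    (∀ k : ℕ, 1 ≤ k → Module.Flat R (A ⧸ ((I ^ k).restrictScalars R))) ∧
    (∀ (hloc : IsLocalRing R), ∀ k : ℕ, 1 ≤ k →
      ((I ^ k).restrictScalars R ⊓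
          ((@IsLocalRing.maximalIdeal R _ hloc) • (⊤ : Submodule R A)) ≤
        (@IsLocalRing.maximalIdeal R _ hloc) • ((I ^ k).restrictScalars R)) ∧
      ((Ideal.map (Ideal.Quotient.mk (Ideal.map (algebraMap R A)
          (@IsLocalRing.maximalIdeal R _ hloc))) I) ^ k
        = Ideal.map (Ideal.Quotient.mk (Ideal.map (algebraMap R A)
          (@IsLocalRing.maximalIdeal R _ hloc))) (I ^ k))) := by
  have hflat : ∀ k : ℕ, 1 ≤ k → Module.Flat R (A ⧸ ((I ^ k).restrictScalars R)) := by
    intro k hk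
    induction k, hk using Nat.le_induction with
    | base => rwa [pow_one]
    | succ k hk ih =>
      have := hgr k hk
      exact Module.Flat.quotient_of_le
        (Submodule.restrictScalars_mono R (Ideal.pow_le_pow_right k.le_succ))
  refine ⟨hflat, fun hloc k hk => ⟨?_, (Ideal.map_pow _ _ _).symm⟩⟩
  have := hflat k hk
  exact Submodule.inf_smul_top_le_smul_of_flat_quotient _ _

/-- Let `A` be an `R`-algebra and `I ⊆ A` an ideal such that `A`, `A/I` and
the graded pieces `I^k/I^{k+1}` are flat over `R` for all `k ≥ 1`. Then
`A/I^k` is flat over `R` for all `k ≥ 1`. Moreover, if `R` is local with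
maximal ideal `𝔪`, then the natural map `I^k/𝔪I^k → A/𝔪A` is injective
(equivalently `I^k ∩ 𝔪A ⊆ 𝔪·I^k`), and consequently the image of `I` in
`A/𝔪A` satisfies `(I·(A/𝔪A))^k = image of I^k in A/𝔪A`. -/
theorem stmt_15 (R A : Type*) [CommRing R] [CommRing A] [Algebra R A]
    (I : Ideal A)
    (hA : Module.Flat R A)
    (hAI : Module.Flat R (A ⧸ (I.restrictScalars R)))
    (hgr : ∀ k : ℕ, 1 ≤ k → Module.Flat R
      (((I ^ k).restrictScalars R) ⧸
        (Submodule.comap ((I ^ k).restrictScalars R).subtype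
          ((I ^ (k+1)).restrictScalars R)))) :
    (∀ k : ℕ, 1 ≤ k → Module.Flat R (A ⧸ ((I ^ k).restrictScalars R))) ∧
    (∀ (hloc : IsLocalRing R), ∀ k : ℕ, 1 ≤ k →
      ((I ^ k).restrictScalars R ⊓
          ((@IsLocalRing.maximalIdeal R _ hloc) • (⊤ : Submodule R A)) ≤
        (@IsLocalRing.maximalIdeal R _ hloc) • ((I ^ k).restrictScalars R)) ∧
      ((Ideal.map (Ideal.Quotient.mk (Ideal.map (algebraMap R A)
          (@IsLocalRing.maximalIdeal R _ hloc))) I) ^ k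
        = Ideal.map (Ideal.Quotient.mk (Ideal.map (algebraMap R A)
          (@IsLocalRing.maximalIdeal R _ hloc))) (I ^ k))) :=
  stmt_15_general R A I hAI hgr
end
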